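/- arXiv:1101.0532 — 6 statements merged into one kernel-verified Lean document; each statement's English description precedes it below -/
import Mathlib

section
/- Let A be an additive commutative group (regarded as a ℤ-module), let l be a finite type, and let P be an integer matrix indexed by (l ⊕ l) × (l ⊕ l) belonging to the symplectic group Sp(l, ℤ) (i.e. P * J * Pᵀ = J). For any vector V : l ⊕ l → A, define the transformed vector W : l ⊕ l → A by W i = ∑_k (P i k) • V k. Then the wedge invariants agree: ∑_{j ∈ l} W(Sum.inl j) ∧ W(Sum.inr j) = ∑_{j ∈ l} V(Sum.inl j) ∧ V(Sum.inr j) in the second exterior power ⋀²_ℤ A. (This is the invariance of the S-equivalence class of the colouring, Equation (40), under a Λ₁-move with symplectic matrix, the key step in the proof of Proposition 30.) -/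
/-- The wedge `v ∧ w` of two elements of an additive commutative group `A` (regarded as a
`ℤ`-module), as an element of the second exterior power `⋀²_ℤ A`. -/
noncomputable def wedge {A : Type*} [AddCommGroup A] (v w : A) : ⋀[ℤ]^2 A :=
  ⟨ExteriorAlgebra.ιMulti ℤ 2 ![v, w],
    ExteriorAlgebra.ιMulti_range ℤ 2 (Set.mem_range_self ![v, w])⟩

/-!
Writing `E = fromBlocks 0 1 0 0`, the wedge invariant of `V` is `∑ₖ,ₖ' E k k' • V k ∧ V k'`.
Such a sum depends on the matrix only through its antisymmetric part `E - Eᵀ = -J`, because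
for a symmetric matrix the terms `(k, k')` and `(k', k)` cancel and the diagonal terms vanish.
Substituting `W = P V` replaces `E` by `Pᵀ E P`, whose antisymmetric part is `-Pᵀ J P = -J`.
-/

open Matrix ExteriorAlgebra

lemma coe_wedge {A : Type*} [AddCommGroup A] (v w : A) :
    (wedge v w : ExteriorAlgebra ℤ A) = ι ℤ v * ι ℤ w := by
  simp [wedge, ιMulti_apply]

namespace ExteriorAlgebra

variable {R M : Type*} [CommRing R] [AddCommGroup M] [Module R M]

def matrixWedge {m : Type*} [Fintype m] (N : Matrix m m R) (V : m → M) : ExteriorAlgebra R M :=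
  ∑ k, ∑ k', N k k' • (ι R (V k) * ι R (V k'))

variable {m : Type*} [Fintype m]

lemma matrixWedge_sub (N N' : Matrix m m R) (V : m → M) :
    matrixWedge (N - N') V = matrixWedge N V - matrixWedge N' V := by
  simp only [matrixWedge, Matrix.sub_apply, sub_smul, Finset.sum_sub_distrib]

lemma matrixWedge_eq_zero_of_isSymm {N : Matrix m m R} (hN : N.IsSymm) (V : m → M) :
    matrixWedge N V = 0 := by
  rw [matrixWedge, ← Finset.sum_product']
  refine Finset.sum_ninvolution Prod.swap (fun p => ?_) (fun p hp hswap => ?_)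
    (fun _ => Finset.mem_univ _) Prod.swap_swap
  · have hmul : ι R (V p.2) * ι R (V p.1) = -(ι R (V p.1) * ι R (V p.2)) :=
      eq_neg_of_add_eq_zero_right (ι_add_mul_swap (V p.1) (V p.2))
    simp [hmul, hN.apply p.1 p.2]
  · obtain ⟨k, k'⟩ := p
    obtain rfl : k' = k := congrArg Prod.fst hswap
    exact hp (by simp)

lemma matrixWedge_eq_of_sub_transpose_eq {N N' : Matrix m m R}
    (h : N - Nᵀ = N' - N'ᵀ) (V : m → M) : matrixWedge N V = matrixWedge N' V := by
  have hsymm : (N - N').IsSymm := by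
    rw [IsSymm, transpose_sub, sub_eq_sub_iff_sub_eq_sub, ← neg_sub N, h, neg_sub]
  rw [← sub_eq_zero, ← matrixWedge_sub, matrixWedge_eq_zero_of_isSymm hsymm]

lemma matrixWedge_linearCombination {n : Type*} [Fintype n] (N : Matrix n n R)
    (P : Matrix n m R) (V : m → M) :
    matrixWedge N (fun i => ∑ k, P i k • V k) = matrixWedge (Pᵀ * N * P) V := by
  calc matrixWedge N (fun i => ∑ k, P i k • V k)
      = ∑ i, ∑ i', ∑ k, ∑ k', (N i i' * (P i k * P i' k')) • (ι R (V k) * ι R (V k')) := by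
        simp only [matrixWedge, map_sum, map_smul, Finset.sum_mul_sum, Finset.smul_sum,
          smul_mul_smul_comm, smul_smul]
    _ = matrixWedge (Pᵀ * N * P) V := by
        simp only [matrixWedge, mul_apply, transpose_apply, Finset.sum_mul, Finset.sum_smul]
        rw [Finset.sum_comm]
        simp_rw [Finset.sum_comm (s := (Finset.univ : Finset n)) (t := (Finset.univ : Finset m)),
          mul_assoc, mul_left_comm (N _ _)]

lemma matrixWedge_fromBlocks_zero_one {l : Type*} [Fintype l] [DecidableEq l]
    (V : l ⊕ l → M) :
    matrixWedge (fromBlocks 0 1 0 0 : Matrix (l ⊕ l) (l ⊕ l) R) V =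
      ∑ j, ι R (V (Sum.inl j)) * ι R (V (Sum.inr j)) := by
  simp [matrixWedge, Fintype.sum_sum_type, one_apply, ite_smul]

end ExteriorAlgebra

lemma Matrix.transpose_mul_mul_sub_transpose {m n R : Type*} [Fintype n] [CommRing R]
    (P : Matrix n m R) (N : Matrix n n R) :
    Pᵀ * N * P - (Pᵀ * N * P)ᵀ = Pᵀ * (N - Nᵀ) * P := by
  simp only [transpose_mul, transpose_transpose, Matrix.mul_sub, Matrix.sub_mul,
    Matrix.mul_assoc]

lemma Matrix.fromBlocks_zero_one_sub_transpose {l R : Type*} [DecidableEq l] [CommRing R] :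
    (fromBlocks 0 1 0 0 : Matrix (l ⊕ l) (l ⊕ l) R) - (fromBlocks 0 1 0 0)ᵀ = -J l R := by
  simp [J, fromBlocks_transpose, sub_eq_add_neg, fromBlocks_neg, fromBlocks_add]

/-- Invariance of the wedge invariant `∑ⱼ W(inl j) ∧ W(inr j)` under a `Λ₁`-move with a
symplectic matrix `P ∈ Sp(l, ℤ)`. -/
theorem wedge_invariant_symplectic {A : Type*} [AddCommGroup A]
    {l : Type*} [Fintype l] [DecidableEq l]
    (P : Matrix (l ⊕ l) (l ⊕ l) ℤ) (hP : P ∈ Matrix.symplecticGroup l ℤ)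
    (V W : l ⊕ l → A) (hW : ∀ i, W i = ∑ k, P i k • V k) :
    ∑ j : l, wedge (W (Sum.inl j)) (W (Sum.inr j)) =
      ∑ j : l, wedge (V (Sum.inl j)) (V (Sum.inr j)) := by
  apply Subtype.ext
  simp only [AddSubmonoidClass.coe_finsetSum, coe_wedge]
  rw [← matrixWedge_fromBlocks_zero_one, ← matrixWedge_fromBlocks_zero_one, funext hW,
    matrixWedge_linearCombination]
  refine matrixWedge_eq_of_sub_transpose_eq ?_ V
  rw [transpose_mul_mul_sub_transpose, fromBlocks_zero_one_sub_transpose, Matrix.mul_neg,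
    Matrix.neg_mul, (SymplecticGroup.mem_iff').mp hP]
end

section
/- Let A be an additive commutative group, l a finite type, S an integer matrix indexed by (l ⊕ l) × (l ⊕ l), and let P and Q be unimodular integer matrices (their determinants are units in ℤ) with Pᵀ * S * P = J and Qᵀ * S * Q = J. Then for every vector V : l ⊕ l → A, the wedge invariant of the vector i ↦ ∑_k (P⁻¹ i k) • V k equals the wedge invariant of the vector i ↦ ∑_k (Q⁻¹ i k) • V k. (Hence the S-equivalence class of the colouring s(K,ρ) of Equation (40), defined as the wedge invariant of P⁻¹V where P is any unimodular matrix bringing M − Mᵀ to standard symplectic form, is independent of the choice of P.) -/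
open Matrix

lemma wedge_coe {A : Type*} [AddCommGroup A] (v w : A) :
    (wedge v w : ExteriorAlgebra ℤ A) = ExteriorAlgebra.ι ℤ v * ExteriorAlgebra.ι ℤ w := by
  simp [wedge, ExteriorAlgebra.ιMulti_apply]

namespace Matrix

variable {R : Type*} [CommRing R] {l n : Type*} [Fintype l]

def wedgeCoeff (N : Matrix (l ⊕ l) n R) : Matrix n n R := N.toRows₁ᵀ * N.toRows₂

theorem transpose_mul_J_mul [DecidableEq l] [Fintype n] (N : Matrix (l ⊕ l) n R) :
    Nᵀ * J l R * N = (wedgeCoeff N)ᵀ - wedgeCoeff N := by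
  obtain ⟨N₁, N₂, rfl⟩ : ∃ N₁ N₂, N = fromRows N₁ N₂ := ⟨_, _, (fromRows_toRows N).symm⟩
  rw [J, transpose_fromRows, fromCols_mul_fromBlocks, fromCols_mul_fromRows, wedgeCoeff,
    toRows₁_fromRows, toRows₂_fromRows]
  simp [sub_eq_add_neg, add_comm]

theorem transpose_nonsing_inv_mul_mul_nonsing_inv [Fintype n] [DecidableEq n]
    {P : Matrix n n R} (hP : IsUnit P.det) (S : Matrix n n R) :
    (P⁻¹)ᵀ * (Pᵀ * S * P) * P⁻¹ = S := by
  have hPt : IsUnit Pᵀ.det := by rwa [det_transpose]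
  rw [transpose_nonsing_inv, Matrix.mul_assoc Pᵀ S P, nonsing_inv_mul_cancel_left _ _ hPt,
    mul_nonsing_inv_cancel_right _ _ hP]

end Matrix

namespace ExteriorAlgebra

variable {R M n : Type*} [CommRing R] [AddCommGroup M] [Module R M] [Fintype n]

theorem sum_smul_ι_mul_ι_eq_zero_of_isSymm {D : Matrix n n R} (hD : D.IsSymm) (v : n → M) :
    ∑ k, ∑ k', D k k' • (ι R (v k) * ι R (v k')) = 0 := by
  rw [← Finset.sum_product']
  refine Finset.sum_involution (fun p _ => p.swap) (fun p _ => ?_) (fun p _ hp hswap => ?_)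
    (fun p _ => Finset.mem_univ _) (fun p _ => p.swap_swap)
  · rw [Prod.fst_swap, Prod.snd_swap, hD.apply p.1 p.2, ← smul_add, ι_add_mul_swap, smul_zero]
  · obtain ⟨k, k'⟩ := p
    obtain rfl : k' = k := congrArg Prod.fst hswap
    exact absurd (by rw [ι_sq_zero, smul_zero]) hp

theorem sum_smul_ι_mul_ι_congr {C C' : Matrix n n R} (h : Cᵀ - C = C'ᵀ - C') (v : n → M) :
    ∑ k, ∑ k', C k k' • (ι R (v k) * ι R (v k')) =
      ∑ k, ∑ k', C' k k' • (ι R (v k) * ι R (v k')) := by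
  have hD : (C - C').IsSymm := by
    rw [IsSymm, transpose_sub, sub_eq_sub_iff_sub_eq_sub, h]
  rw [← sub_eq_zero, ← sum_smul_ι_mul_ι_eq_zero_of_isSymm hD v, ← Finset.sum_sub_distrib]
  simp only [← Finset.sum_sub_distrib, ← sub_smul, Matrix.sub_apply]

variable {l : Type*} [Fintype l]

theorem sum_ι_mul_ι_eq_sum_wedgeCoeff (N : Matrix (l ⊕ l) n R) (v : n → M) :
    ∑ j, ι R (∑ k, N (.inl j) k • v k) * ι R (∑ k, N (.inr j) k • v k) =
      ∑ k, ∑ k', N.wedgeCoeff k k' • (ι R (v k) * ι R (v k')) := by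
  simp only [map_sum, map_smul, Finset.sum_mul_sum, smul_mul_smul_comm, Matrix.wedgeCoeff,
    Matrix.mul_apply, Matrix.transpose_apply, Matrix.toRows₁_apply, Matrix.toRows₂_apply,
    Finset.sum_smul]
  rw [Finset.sum_comm]
  exact Finset.sum_congr rfl fun k _ => Finset.sum_comm

end ExteriorAlgebra

/-- The `S`-equivalence class of the colouring is well defined: the wedge invariant of `P⁻¹V`
does not depend on the choice of unimodular matrix `P` bringing `S` to the standard symplectic
form `J`. -/
theorem wedge_invariant_well_defined {A : Type*} [AddCommGroup A]
    {l : Type*} [Fintype l] [DecidableEq l]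
    (S P Q : Matrix (l ⊕ l) (l ⊕ l) ℤ)
    (hP : IsUnit P.det) (hQ : IsUnit Q.det)
    (hPS : Pᵀ * S * P = Matrix.J l ℤ) (hQS : Qᵀ * S * Q = Matrix.J l ℤ)
    (V : l ⊕ l → A) :
    ∑ j : l, wedge ((fun i => ∑ k, P⁻¹ i k • V k) (Sum.inl j))
        ((fun i => ∑ k, P⁻¹ i k • V k) (Sum.inr j)) =
      ∑ j : l, wedge ((fun i => ∑ k, Q⁻¹ i k • V k) (Sum.inl j))
        ((fun i => ∑ k, Q⁻¹ i k • V k) (Sum.inr j)) := by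
  have hP' : (P⁻¹)ᵀ * J l ℤ * P⁻¹ = S := hPS ▸ transpose_nonsing_inv_mul_mul_nonsing_inv hP S
  have hQ' : (Q⁻¹)ᵀ * J l ℤ * Q⁻¹ = S := hQS ▸ transpose_nonsing_inv_mul_mul_nonsing_inv hQ S
  have hC : (P⁻¹.wedgeCoeff)ᵀ - P⁻¹.wedgeCoeff = (Q⁻¹.wedgeCoeff)ᵀ - Q⁻¹.wedgeCoeff := by
    rw [← transpose_mul_J_mul, ← transpose_mul_J_mul, hP', hQ']
  apply Subtype.ext
  push_cast [wedge_coe]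
  rw [ExteriorAlgebra.sum_ι_mul_ι_eq_sum_wedgeCoeff, ExteriorAlgebra.sum_ι_mul_ι_eq_sum_wedgeCoeff]
  exact ExteriorAlgebra.sum_smul_ι_mul_ι_congr hC V
end

section
/- Let A be a finitely generated additive commutative group. Then for every element X of the second exterior power ⋀²_ℤ A there exist a natural number g and a vector V : Fin g ⊕ Fin g → A whose entries generate A (i.e. AddSubgroup.closure (Set.range V) = ⊤) and whose wedge invariant equals X: ∑_{j} V(Sum.inl j) ∧ V(Sum.inr j) = X. (This is the surjectivity of the map φ onto A ∧ A in the proof of Proposition 30, realized by the explicit construction ψ.) -/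
section appendPairs

variable {α : Type*} {g h : ℕ}

def appendPairs (V : Fin g ⊕ Fin g → α) (W : Fin h ⊕ Fin h → α) :
    Fin (g + h) ⊕ Fin (g + h) → α :=
  Sum.elim (Fin.append (V ∘ .inl) (W ∘ .inl)) (Fin.append (V ∘ .inr) (W ∘ .inr))

theorem range_subset_range_appendPairs (V : Fin g ⊕ Fin g → α) (W : Fin h ⊕ Fin h → α) :
    Set.range W ⊆ Set.range (appendPairs V W) := by
  rintro _ ⟨i | i, rfl⟩
  · exact ⟨.inl (Fin.natAdd g i), by simp [appendPairs]⟩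
  · exact ⟨.inr (Fin.natAdd g i), by simp [appendPairs]⟩

end appendPairs

section wedgeInvariant

variable {A : Type*} [AddCommGroup A]

theorem wedge_eq_ιMulti (v w : A) : wedge v w = exteriorPower.ιMulti ℤ 2 ![v, w] := rfl

theorem wedge_smul_left (z : ℤ) (v w : A) : wedge (z • v) w = z • wedge v w := by
  simp only [wedge_eq_ιMulti]
  exact DFunLike.congr_fun (map_smul (exteriorPower.ιMulti ℤ 2).curryLeft z v) ![w]

theorem wedge_zero_right (v : A) : wedge v 0 = 0 :=
  (exteriorPower.ιMulti ℤ 2).map_coord_zero 1 rfl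

noncomputable def wedgeInvariant {g : ℕ} (V : Fin g ⊕ Fin g → A) : ⋀[ℤ]^2 A :=
  ∑ j, wedge (V (.inl j)) (V (.inr j))

theorem wedgeInvariant_appendPairs {g h : ℕ} (V : Fin g ⊕ Fin g → A) (W : Fin h ⊕ Fin h → A) :
    wedgeInvariant (appendPairs V W) = wedgeInvariant V + wedgeInvariant W := by
  simp [wedgeInvariant, appendPairs, Fin.sum_univ_add]

theorem wedgeInvariant_elim_zero {m : ℕ} (s : Fin m → A) :
    wedgeInvariant (Sum.elim s 0) = 0 := by
  simp [wedgeInvariant, wedge_zero_right]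

variable (A) in
def wedgeInvariantRange : Submodule ℤ (⋀[ℤ]^2 A) where
  carrier := {X | ∃ (g : ℕ) (V : Fin g ⊕ Fin g → A), wedgeInvariant V = X}
  zero_mem' := ⟨0, Sum.elim Fin.elim0 Fin.elim0, by simp [wedgeInvariant]⟩
  add_mem' := by
    rintro _ _ ⟨g, V, rfl⟩ ⟨h, W, rfl⟩
    exact ⟨g + h, appendPairs V W, wedgeInvariant_appendPairs V W⟩
  smul_mem' := by
    rintro z _ ⟨g, V, rfl⟩
    refine ⟨g, Sum.elim (z • V ∘ .inl) (V ∘ .inr), ?_⟩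
    simp [wedgeInvariant, wedge_smul_left, Finset.smul_sum]

theorem wedgeInvariantRange_eq_top : wedgeInvariantRange A = ⊤ := by
  rw [eq_top_iff, ← exteriorPower.ιMulti_span, Submodule.span_le]
  rintro _ ⟨v, rfl⟩
  refine ⟨1, Sum.elim (fun _ => v 0) (fun _ => v 1), ?_⟩
  rw [wedgeInvariant, Fin.sum_univ_one, wedge_eq_ιMulti]
  exact congrArg (exteriorPower.ιMulti ℤ 2) (FinVec.etaExpand_eq v)

end wedgeInvariant

/-- Surjectivity of the wedge-invariant map `φ` onto `⋀²_ℤ A`: every element of the second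
exterior power of a finitely generated abelian group `A` is the wedge invariant of some
generating colouring vector. -/
theorem wedge_invariant_surjective {A : Type*} [AddCommGroup A] [AddGroup.FG A]
    (X : ⋀[ℤ]^2 A) :
    ∃ (g : ℕ) (V : Fin g ⊕ Fin g → A),
      AddSubgroup.closure (Set.range V) = ⊤ ∧
      ∑ j : Fin g, wedge (V (Sum.inl j)) (V (Sum.inr j)) = X := by
  obtain ⟨g, V, hV⟩ : X ∈ wedgeInvariantRange A := by
    simp [wedgeInvariantRange_eq_top]
  obtain ⟨S, hS, hS_finite⟩ := AddGroup.fg_iff.mp ‹AddGroup.FG A›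
  obtain ⟨m, s, rfl⟩ := hS_finite.fin_embedding
  refine ⟨g + m, appendPairs V (Sum.elim s 0), eq_top_mono (AddSubgroup.closure_mono ?_) hS, ?_⟩
  · exact (Set.subset_union_left.trans (Set.Sum.elim_range _ _).superset).trans
      (range_subset_range_appendPairs V _)
  · change wedgeInvariant _ = X
    rw [wedgeInvariant_appendPairs, wedgeInvariant_elim_zero, add_zero, hV]
end

section
/- Let A be an additive commutative group, t : A ≃+ A an automorphism, m a natural number, M an m × m integer matrix such that the determinant of Mᵀ − M is a unit in ℤ (i.e. det(Mᵀ − M) = ±1), and V : Fin m → A a vector satisfying the twisted Seifert equation ∑_j (M i j) • t(V j) = ∑_j (M j i) • V j for every i, and whose entries generate A (AddSubgroup.closure (Set.range V) = ⊤). Then A admits a generating set of cardinality at most the rank of M: there exists a finite set s ⊆ A with s.card ≤ Matrix.rank M and AddSubgroup.closure s = ⊤. (This is the key step 'Rank(M) is bounded below by Rank(V)' in the proof of Corollary 11.) -/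
/-!
Read as matrices acting on `A`-valued vectors, the Seifert equation says
`(Mᵀ - M) V = M w` with `w = tV - V`. Since `Mᵀ - M` is invertible over `ℤ`, `V = (Mᵀ - M)⁻¹ M w`,
so the entries of `M w` already generate `A`. The column space of `M` is a free `ℤ`-module of
rank `M.rank`, which gives a factorisation `M = C E` through `ℤ ^ M.rank`; hence the entries of
`M w = C (E w)` are integer combinations of the `M.rank` entries of `E w`.
-/

open Matrix

namespace Matrix

variable {R A ι κ μ : Type*}

section smulVec

variable [Semiring R] [AddCommMonoid A] [Module R A] [Fintype κ]

/-- `Matrix.mulVec` for vectors with entries in an `R`-module. -/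
def smulVec (M : Matrix ι κ R) (v : κ → A) : ι → A := fun i => ∑ j, M i j • v j

theorem smulVec_apply (M : Matrix ι κ R) (v : κ → A) (i : ι) :
    M.smulVec v i = ∑ j, M i j • v j := rfl

theorem smulVec_smulVec [Fintype μ] (C : Matrix ι κ R) (E : Matrix κ μ R) (v : μ → A) :
    C.smulVec (E.smulVec v) = (C * E).smulVec v := by
  ext i
  simp only [smulVec_apply, mul_apply, Finset.smul_sum, Finset.sum_smul, smul_smul]
  exact Finset.sum_comm

theorem one_smulVec [DecidableEq κ] (v : κ → A) : (1 : Matrix κ κ R).smulVec v = v := by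
  ext i
  simp [smulVec_apply, one_apply, ite_smul]

theorem span_range_smulVec_le (M : Matrix ι κ R) (v : κ → A) :
    Submodule.span R (Set.range (M.smulVec v)) ≤ Submodule.span R (Set.range v) :=
  Submodule.span_le.mpr <| Set.range_subset_iff.mpr fun _ =>
    Submodule.sum_mem _ fun j _ => Submodule.smul_mem _ _ (Submodule.subset_span ⟨j, rfl⟩)

end smulVec

section Ring

variable [AddCommGroup A] [Fintype κ]

theorem sub_smulVec [Ring R] [Module R A] (M N : Matrix ι κ R) (v : κ → A) :
    (M - N).smulVec v = M.smulVec v - N.smulVec v := by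
  ext i
  simp [smulVec_apply, sub_smul]

theorem smulVec_sub [Ring R] [Module R A] (M : Matrix ι κ R) (v w : κ → A) :
    M.smulVec (v - w) = M.smulVec v - M.smulVec w := by
  ext i
  simp [smulVec_apply, smul_sub]

theorem nonsing_inv_smulVec_smulVec [CommRing R] [Module R A] [DecidableEq κ]
    {B : Matrix κ κ R} (hB : IsUnit B.det) (v : κ → A) : B⁻¹.smulVec (B.smulVec v) = v := by
  rw [smulVec_smulVec, nonsing_inv_mul B hB, one_smulVec]

end Ring

theorem exists_eq_mul_of_rank [CommRing R] [IsDomain R] [IsPrincipalIdealRing R] [Fintype κ]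
    (M : Matrix ι κ R) :
    ∃ (C : Matrix ι (Fin M.rank) R) (E : Matrix (Fin M.rank) κ R), M = C * E := by
  classical
  have : Module.Free R (LinearMap.range M.mulVecLin) := Module.free_of_finite_type_torsion_free'
  let b := Module.finBasis R (LinearMap.range M.mulVecLin)
  have hcol (j : κ) : M.col j ∈ LinearMap.range M.mulVecLin :=
    ⟨Pi.single j 1, M.mulVec_single_one j⟩
  refine ⟨of fun i k => (b k : ι → R) i, of fun k j => b.repr ⟨M.col j, hcol j⟩ k, ?_⟩
  ext i j
  have hrepr := congrFun (congrArg Subtype.val (b.sum_repr ⟨M.col j, hcol j⟩)) i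
  simp only [Submodule.coe_sum, Submodule.coe_smul, Finset.sum_apply, Pi.smul_apply,
    smul_eq_mul] at hrepr
  exact hrepr.symm.trans (Finset.sum_congr rfl fun k _ => mul_comm _ _)

end Matrix

/-- Corollary 11 (key step): if the surface data `(M, V)` satisfies the twisted Seifert equation,
`det (Mᵀ − M)` is a unit and the entries of `V` generate `A`, then `A` has a generating set of
cardinality at most `rank M`. -/
theorem generating_set_card_le_rank {A : Type*} [AddCommGroup A] (t : A ≃+ A)
    (m : ℕ) (M : Matrix (Fin m) (Fin m) ℤ)
    (hdet : IsUnit (Mᵀ - M).det)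
    (V : Fin m → A)
    (hseifert : ∀ i, ∑ j, M i j • t (V j) = ∑ j, M j i • V j)
    (hgen : AddSubgroup.closure (Set.range V) = ⊤) :
    ∃ s : Finset A, s.card ≤ M.rank ∧ AddSubgroup.closure (s : Set A) = ⊤ := by
  classical
  set w : Fin m → A := t ∘ V - V
  have hskew : (Mᵀ - M).smulVec V = M.smulVec w := by
    rw [sub_smulVec, smulVec_sub, show M.smulVec (t ∘ V) = Mᵀ.smulVec V from funext hseifert]
  obtain ⟨C, E, hCE⟩ := M.exists_eq_mul_of_rank
  refine ⟨Finset.univ.image (E.smulVec w), Finset.card_image_le.trans (by simp), ?_⟩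
  have hMw : M.smulVec w = C.smulVec (E.smulVec w) := by rw [smulVec_smulVec, ← hCE]
  rw [← map_eq_top_iff AddSubgroup.toIntSubmodule, AddSubgroup.toIntSubmodule_closure] at hgen ⊢
  rw [eq_top_iff, ← hgen]
  calc Submodule.span ℤ (Set.range V) = _ := by rw [nonsing_inv_smulVec_smulVec hdet]
    _ ≤ Submodule.span ℤ (Set.range ((Mᵀ - M).smulVec V)) := span_range_smulVec_le _ _
    _ ≤ Submodule.span ℤ (Set.range (E.smulVec w)) := by
      rw [hskew, hMw]
      exact span_range_smulVec_le _ _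
    _ = _ := by rw [Finset.coe_image, Finset.coe_univ, Set.image_univ]
end

section
/- For every positive natural number n, the third group homology of the cyclic group ℤ/nℤ with trivial integer coefficients has order n: Nat.card of the underlying module of groupHomology (Rep.trivial ℤ (Multiplicative (ZMod n)) ℤ) 3 equals n. (This is the computation |H₃(ℤ/nℤ;ℤ)| = n used in Section 6.1.1 to obtain the relative-bordism upper bound of n on the number of ρ̄-equivalence classes of knots coloured by a metacyclic group C_m ⋉ ℤ/nℤ.) -/
/-!
Over `ℤ[G]`, for `G` finite cyclic with generator `g` and norm element `N = ∑ h`, the trivial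
module `ℤ` has the 2-periodic free resolution
`⋯ → ℤ[G] --N--> ℤ[G] --(g - 1)--> ℤ[G] → ℤ` (Mathlib's `Rep.FiniteCyclicGroup.resolution`,
carried along `Rep ℤ G ≌ ModuleCat ℤ[G]`). Tensoring it with `ℤ` turns `N` into multiplication
by `|G|` and `g - 1` into `0`, so every odd `Tor` is `ℤ / |G|`.
-/

open CategoryTheory

/-- Group homology `Hₙ(G; A)` of a representation `A : Rep ℤ G` of an abelian group `G`,
defined as `Torₙ^{ℤ[G]}(A, ℤ)` where `ℤ` carries the trivial `ℤ[G]`-module structure. -/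
noncomputable def groupHomologyTor {G : Type} [CommGroup G] (A : Rep ℤ G) (n : ℕ) :
    ModuleCat (MonoidAlgebra ℤ G) :=
  ((Tor (ModuleCat (MonoidAlgebra ℤ G)) n).obj
      (Rep.toModuleMonoidAlgebra.obj A)).obj
    (Rep.toModuleMonoidAlgebra.obj (Rep.trivial ℤ G ℤ))

open MonoidalCategory Limits

namespace HomologicalComplex

variable {C D : Type*} [Category* C] [Category* D] [HasZeroMorphisms C] [HasZeroMorphisms D]
  {c : ComplexShape ℕ} [DecidableRel c.Rel] (hc : ∀ i j, c.Rel i j → Odd (i + j))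
  (F : C ⥤ D) [F.PreservesZeroMorphisms] {A : C} {φ ψ : A ⟶ A} (hOdd : φ ≫ ψ = 0)
  (hEven : ψ ≫ φ = 0) {B : D} {φ' ψ' : B ⟶ B} (hOdd' : φ' ≫ ψ' = 0) (hEven' : ψ' ≫ φ' = 0)

noncomputable def mapAlternatingConstIso (e : F.obj A ≅ B) (hφ : F.map φ ≫ e.hom = e.hom ≫ φ')
    (hψ : F.map ψ ≫ e.hom = e.hom ≫ ψ') :
    (F.mapHomologicalComplex c).obj (alternatingConst A hOdd hEven hc) ≅
      alternatingConst B hOdd' hEven' hc :=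
  Hom.isoOfComponents (fun _ => e) fun i j _ => by
    simp only [Functor.mapHomologicalComplex_obj_d, alternatingConst_d]
    split_ifs
    · exact hφ.symm
    · exact hψ.symm

end HomologicalComplex

namespace AddEquiv

lemma card_quotient_range_nsmul_id {R M : Type*} [Ring R] [AddCommGroup M] [Module R M]
    (e : M ≃+ ℤ) (n : ℕ) : Nat.card (M ⧸ LinearMap.range (n • LinearMap.id : M →ₗ[R] M)) = n := by
  have hmap : (LinearMap.range (n • LinearMap.id : M →ₗ[R] M)).toAddSubgroup.map e.toAddMonoidHom =
      AddSubgroup.zmultiples (n : ℤ) := by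
    ext z
    simp only [AddSubgroup.mem_map, Submodule.mem_toAddSubgroup, LinearMap.mem_range,
      LinearMap.smul_apply, LinearMap.id_apply, Int.mem_zmultiples_iff]
    constructor
    · rintro ⟨_, ⟨y, rfl⟩, rfl⟩
      exact ⟨e y, by simp⟩
    · rintro ⟨w, rfl⟩
      exact ⟨_, ⟨e.symm w, rfl⟩, by simp [mul_comm]⟩
  exact (Nat.card_congr ((QuotientAddGroup.congr _ _ e hmap).trans
    (Int.quotientZMultiplesNatEquivZMod n)).toEquiv).trans (Nat.card_zmod n)

end AddEquiv

namespace Rep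

universe u

variable {k G : Type u} [CommRing k] [CommGroup G]

instance : (toModuleMonoidAlgebra (k := k) (G := G)).Additive where
  map_add := rfl

lemma leftRegular_ρ_apply (g : G) (x : MonoidAlgebra k G) :
    (leftRegular k G).ρ g x = MonoidAlgebra.of k G g * x := by
  rw [← Representation.asAlgebraHom_ofMulAction_smul_eq_mul, Representation.asAlgebraHom_of]

lemma leftRegular_applyAsHom_sub_id_apply (g : G) (x : MonoidAlgebra k G) :
    ((leftRegular k G).applyAsHom g - 𝟙 _).hom x = (MonoidAlgebra.of k G g - 1) * x := by
  change (leftRegular k G).ρ g x - x = _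
  rw [leftRegular_ρ_apply, sub_mul, one_mul]

lemma leftRegular_norm_apply [Fintype G] (x : MonoidAlgebra k G) :
    (leftRegular k G).norm.hom x = (∑ h : G, MonoidAlgebra.of k G h) * x := by
  change (∑ h : G, (leftRegular k G).ρ h) x = _
  rw [LinearMap.sum_apply, Finset.sum_mul]
  exact Finset.sum_congr rfl fun h _ => leftRegular_ρ_apply h x

lemma of_smul_toModuleMonoidAlgebra_trivial (g : G)
    (t : toModuleMonoidAlgebra.obj (trivial k G k)) : MonoidAlgebra.of k G g • t = t := by
  change (trivial k G k).ρ.asAlgebraHom (MonoidAlgebra.of k G g) t = t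
  rw [Representation.asAlgebraHom_of]
  rfl

lemma sum_of_smul_toModuleMonoidAlgebra_trivial [Fintype G]
    (t : toModuleMonoidAlgebra.obj (trivial k G k)) :
    (∑ h : G, MonoidAlgebra.of k G h) • t = Fintype.card G • t := by
  simp only [Finset.sum_smul, of_smul_toModuleMonoidAlgebra_trivial, Finset.sum_const,
    Finset.card_univ]

noncomputable def tensorLeftRegularIso (T : ModuleCat (MonoidAlgebra k G)) :
    T ⊗ toModuleMonoidAlgebra.obj (leftRegular k G) ≅ T :=
  whiskerLeftIso T Representation.ofMulActionSelfAsModuleEquiv.toModuleIso ≪≫ ρ_ T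

lemma tensorLeftRegularIso_hom_tmul (T : ModuleCat (MonoidAlgebra k G)) (t : T)
    (x : MonoidAlgebra k G) : (tensorLeftRegularIso T).hom (t ⊗ₜ x) = x • t :=
  rfl

lemma whiskerLeft_map_comp_tensorLeftRegularIso (T : ModuleCat (MonoidAlgebra k G))
    (f : leftRegular k G ⟶ leftRegular k G) (c : MonoidAlgebra k G) (a : ℕ)
    (hf : ∀ x, f.hom x = c * x) (hc : ∀ t : T, c • t = a • t) :
    T ◁ toModuleMonoidAlgebra.map f ≫ (tensorLeftRegularIso T).hom =
      (tensorLeftRegularIso T).hom ≫ (a • 𝟙 T) := by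
  refine ModuleCat.hom_ext (TensorProduct.ext' fun t (x : MonoidAlgebra k G) => ?_)
  change (tensorLeftRegularIso T).hom (t ⊗ₜ f.hom x) = a • (tensorLeftRegularIso T).hom (t ⊗ₜ x)
  rw [tensorLeftRegularIso_hom_tmul, tensorLeftRegularIso_hom_tmul, hf, mul_comm, mul_smul, hc,
    smul_comm]

namespace FiniteCyclicGroup

variable [Fintype G] (g : G)

noncomputable def trivialTensorChainComplexIso :
    ((toModuleMonoidAlgebra ⋙ (tensoringLeft _).obj (toModuleMonoidAlgebra.obj (trivial k G k))
      ).mapHomologicalComplex _).obj ((chainComplexFunctor k g).obj (leftRegular k G)) ≅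
    HomologicalComplex.alternatingConst (toModuleMonoidAlgebra.obj (trivial k G k))
      (φ := Fintype.card G • 𝟙 _) (ψ := 0) comp_zero zero_comp
      fun _ _ => ComplexShape.down_nat_odd_add :=
  HomologicalComplex.mapAlternatingConstIso _ _
    (by ext; simp [sub_hom, applyAsHom, norm]) (by ext; simp [sub_hom, applyAsHom, norm]) _ _
    (tensorLeftRegularIso _)
    (whiskerLeft_map_comp_tensorLeftRegularIso _ _ _ _ leftRegular_norm_apply
      sum_of_smul_toModuleMonoidAlgebra_trivial)
    ((whiskerLeft_map_comp_tensorLeftRegularIso _ _ _ 0 (leftRegular_applyAsHom_sub_id_apply g)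
      fun t => by rw [sub_smul, of_smul_toModuleMonoidAlgebra_trivial, one_smul, sub_self,
        zero_smul]).trans (by rw [zero_smul, comp_zero]))

end FiniteCyclicGroup

end Rep

namespace Rep.FiniteCyclicGroup

variable {G : Type} [CommGroup G] [Fintype G]

noncomputable def groupHomologyTorTrivialOddIso (g : G) (hg : ∀ x, x ∈ Subgroup.zpowers g)
    (i : ℕ) :
    groupHomologyTor (trivial ℤ G ℤ) (2 * i + 1) ≅
      ModuleCat.of _ (toModuleMonoidAlgebra.obj (trivial ℤ G ℤ) ⧸
        LinearMap.range (Fintype.card G • 𝟙 (toModuleMonoidAlgebra.obj (trivial ℤ G ℤ))).hom) :=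
  (toModuleMonoidAlgebra.mapProjectiveResolution (resolution ℤ g hg)).isoLeftDerivedObj _ _ ≪≫
    (HomologicalComplex.homologyFunctor _ _ _).mapIso (trivialTensorChainComplexIso g) ≪≫
    HomologicalComplex.alternatingConstHomologyIsoOdd _ _ _ _ (by simp) (by simp) (by simp) ≪≫
    ShortComplex.asIsoHomologyι _ rfl ≪≫ ShortComplex.moduleCatOpcyclesIso _

theorem card_groupHomologyTor_trivial_odd [IsCyclic G] (i : ℕ) :
    Nat.card (groupHomologyTor (trivial ℤ G ℤ) (2 * i + 1)) = Nat.card G := by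
  obtain ⟨g, hg⟩ := IsCyclic.exists_generator (α := G)
  rw [Nat.card_congr ((forget _).mapIso (groupHomologyTorTrivialOddIso g hg i)).toEquiv,
    ModuleCat.hom_nsmul, ModuleCat.hom_id, Nat.card_eq_fintype_card (α := G)]
  exact (trivial ℤ G ℤ).ρ.asModuleEquiv.toAddEquiv.card_quotient_range_nsmul_id _

end Rep.FiniteCyclicGroup

/-- `|H₃(ℤ/nℤ; ℤ)| = n`: the third group homology of the cyclic group `ℤ/nℤ` with trivial
integer coefficients has order `n` (Section 6.1.1). -/
theorem card_groupHomology_three_zmod (n : ℕ) (hn : 0 < n) :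
    Nat.card (groupHomologyTor (Rep.trivial ℤ (Multiplicative (ZMod n)) ℤ) 3) = n := by
  have : NeZero n := ⟨hn.ne'⟩
  simpa using
    Rep.FiniteCyclicGroup.card_groupHomologyTor_trivial_odd (G := Multiplicative (ZMod n)) 1
end

section
/- Let n ≥ 2 be a natural number and let ξ ∈ ℤ/nℤ be such that ξ and 1 − ξ are both units. Let β ∈ ℤ/nℤ satisfy (1 − ξ)·β = 1, set v₂ := ξ·β ∈ ℤ/nℤ, and let a := ZMod.val((−ξ)·β²) ∈ ℕ. For k : ℕ let M_k be the 2 × 2 integer matrix [[a + k·n, 0], [1, 1]]. Let L := (ZMod.val (1 : ZMod n), ZMod.val v₂) ∈ ℤ² and L' := (ZMod.val ξ, ZMod.val (ξ·v₂)) ∈ ℤ² be the vectors of least nonnegative integer lifts of the colouring vector V = (1, v₂) and of ξ•V, and set w_k := M_k · L' − (M_k)ᵀ · L ∈ ℤ². Then: (i) every entry of w_k is divisible by n; (ii) defining su_k ∈ ℤ/nℤ as the reduction mod n of L₀·((w_k)₀ / n) + L₁·((w_k)₁ / n), one has su_k − su_{k'} = ((k : ℤ) − k')·(ξ − 1) in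 ℤ/nℤ for all k, k'; (iii) consequently su_0, su_1, …, su_{n−1} are pairwise distinct. (This is the computation of the surface untying invariant su(F_k, ρ̄_k) of the base-knots T_k via Equation (34), showing the n base-knots of Figure 7 lie in pairwise distinct ρ̄-equivalence classes, as asserted in Section 6.1.1.) -/
open Matrix

/-- The computation of the surface untying invariants `su(F_k, ρ̄_k)` of the twist-knot
base-knots `T_k` of Figure 7, via Equation (34): (i) the integer vector
`w_k = M_k·L' − M_kᵀ·L` has all entries divisible by `n`; (ii) the invariants satisfy
`su_k − su_{k'} = (k − k')·(ξ − 1)` in `ℤ/nℤ`; (iii) hence `su_0, …, su_{n−1}` are pairwise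
distinct, so the `n` base-knots lie in pairwise distinct `ρ̄`-equivalence classes. -/
theorem surface_untying_invariant_twist_knots (n : ℕ) (hn : 2 ≤ n) (ξ β : ZMod n)
    (hξ : IsUnit ξ) (h1ξ : IsUnit (1 - ξ)) (hβ : (1 - ξ) * β = 1)
    (v₂ : ZMod n) (hv₂ : v₂ = ξ * β)
    (a : ℕ) (ha : a = ((-ξ) * β ^ 2).val)
    (M : ℕ → Matrix (Fin 2) (Fin 2) ℤ)
    (hM : ∀ k : ℕ, M k = !![(a : ℤ) + (k : ℤ) * (n : ℤ), 0; 1, 1])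
    (L L' : Fin 2 → ℤ)
    (hL : L = ![((1 : ZMod n).val : ℤ), (v₂.val : ℤ)])
    (hL' : L' = ![(ξ.val : ℤ), ((ξ * v₂).val : ℤ)])
    (w : ℕ → Fin 2 → ℤ)
    (hw : ∀ k : ℕ, w k = (M k).mulVec L' - (M k)ᵀ.mulVec L)
    (su : ℕ → ZMod n)
    (hsu : ∀ k : ℕ, su k = ((L 0 * (w k 0 / (n : ℤ)) + L 1 * (w k 1 / (n : ℤ)) : ℤ) : ZMod n)) :
    (∀ (k : ℕ) (i : Fin 2), (n : ℤ) ∣ w k i) ∧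
    (∀ k k' : ℕ, su k - su k' = ((((k : ℤ) - (k' : ℤ)) : ℤ) : ZMod n) * (ξ - 1)) ∧
    (∀ k k' : ℕ, k < n → k' < n → su k = su k' → k = k') := by
  haveI : NeZero n := ⟨by omega⟩
  haveI : Fact (1 < n) := ⟨by omega⟩
  have hnz : (n : ℤ) ≠ 0 := by exact_mod_cast (by omega : n ≠ 0)
  have hTr : ∀ k : ℕ, (M k)ᵀ = !![(a : ℤ) + (k : ℤ) * (n : ℤ), 1; 0, 1] := by
    intro k; rw [hM]; ext i j; fin_cases i <;> fin_cases j <;> simp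
  have hw0 : ∀ k : ℕ, w k 0 =
      ((a : ℤ) + k * n) * (ξ.val : ℤ) -
        (((a : ℤ) + k * n) * ((1 : ZMod n).val : ℤ) + (v₂.val : ℤ)) := by
    intro k
    rw [hw, hTr, hM, hL, hL']
    simp [Matrix.mulVec, dotProduct, Fin.sum_univ_two, -ZMod.natCast_val]
    ring
  have hw1 : ∀ k : ℕ, w k 1 =
      (ξ.val : ℤ) + ((ξ * v₂).val : ℤ) - (v₂.val : ℤ) := by
    intro k
    rw [hw, hTr, hM, hL, hL']
    simp [Matrix.mulVec, dotProduct, Fin.sum_univ_two, -ZMod.natCast_val]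
  -- basic casting facts
  have hone : ((1 : ZMod n).val : ℤ) = 1 := by
    rw [ZMod.val_one n]; norm_num
  have hcast : ∀ x : ZMod n, (((x.val : ℤ) : ZMod n)) = x := by
    intro x; push_cast [ZMod.natCast_val, ZMod.cast_id]; rfl
  have ha' : ((a : ℤ) : ZMod n) = -ξ * β ^ 2 := by
    rw [ha]; push_cast [ZMod.natCast_val, ZMod.cast_id]; rfl
  -- divisibility
  have hdvd : ∀ (k : ℕ) (i : Fin 2), (n : ℤ) ∣ w k i := by
    intro k i
    rw [← ZMod.intCast_zmod_eq_zero_iff_dvd]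
    fin_cases i
    · show ((w k 0 : ℤ) : ZMod n) = 0
      rw [hw0 k]
      push_cast [ZMod.natCast_val, ZMod.cast_id, ha, hv₂]
      linear_combination (ξ * β) * hβ + ((k : ZMod n) * ξ - (k : ZMod n)) * (ZMod.natCast_self n)
    · show ((w k 1 : ℤ) : ZMod n) = 0
      rw [hw1 k]
      push_cast [ZMod.natCast_val, ZMod.cast_id, hv₂]
      linear_combination (-ξ) * hβ
  refine ⟨hdvd, ?_, ?_⟩
  · -- the difference formula
    have key : ∀ k k' : ℕ, su k - su k' =
        ((((k : ℤ) - (k' : ℤ)) : ℤ) : ZMod n) * (ξ - 1) := by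
      intro k k'
      have hq : ∀ j : ℕ, (n : ℤ) * (w j 0 / n) = w j 0 := fun j =>
        Int.mul_ediv_cancel' (hdvd j 0)
      have hdiffw : w k 0 - w k' 0 = ((k : ℤ) - k') * n * ((ξ.val : ℤ) - 1) := by
        rw [hw0 k, hw0 k', hone]; ring
      have hdiv : w k 0 / n - w k' 0 / n = ((k : ℤ) - k') * ((ξ.val : ℤ) - 1) := by
        have : (n : ℤ) * (w k 0 / n - w k' 0 / n) =
            (n : ℤ) * (((k : ℤ) - k') * ((ξ.val : ℤ) - 1)) := by
          rw [mul_sub, hq, hq, hdiffw]; ring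
        exact mul_left_cancel₀ hnz this
      rw [hsu k, hsu k', hL]
      simp only [Matrix.cons_val_zero, Matrix.cons_val_one, Matrix.head_cons]
      rw [hone]
      have : (1 : ℤ) * (w k 0 / n) + (v₂.val : ℤ) * (w k 1 / n)
          - ((1 : ℤ) * (w k' 0 / n) + (v₂.val : ℤ) * (w k' 1 / n))
          = ((k : ℤ) - k') * ((ξ.val : ℤ) - 1) := by
        rw [hw1 k, hw1 k'] at *
        have := hdiv
        ring_nf
        ring_nf at this
        linarith [this]
      rw [← Int.cast_sub, this]
      push_cast [ZMod.natCast_val, ZMod.cast_id]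
      ring
    exact key
  · -- injectivity
    intro k k' hk hk' hsu_eq
    have key : ∀ k k' : ℕ, su k - su k' =
        ((((k : ℤ) - (k' : ℤ)) : ℤ) : ZMod n) * (ξ - 1) := by
      intro k k'
      have hq : ∀ j : ℕ, (n : ℤ) * (w j 0 / n) = w j 0 := fun j =>
        Int.mul_ediv_cancel' (hdvd j 0)
      have hdiffw : w k 0 - w k' 0 = ((k : ℤ) - k') * n * ((ξ.val : ℤ) - 1) := by
        rw [hw0 k, hw0 k', hone]; ring
      have hdiv : w k 0 / n - w k' 0 / n = ((k : ℤ) - k') * ((ξ.val : ℤ) - 1) := by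
        have : (n : ℤ) * (w k 0 / n - w k' 0 / n) =
            (n : ℤ) * (((k : ℤ) - k') * ((ξ.val : ℤ) - 1)) := by
          rw [mul_sub, hq, hq, hdiffw]; ring
        exact mul_left_cancel₀ hnz this
      rw [hsu k, hsu k', hL]
      simp only [Matrix.cons_val_zero, Matrix.cons_val_one, Matrix.head_cons]
      rw [hone]
      have : (1 : ℤ) * (w k 0 / n) + (v₂.val : ℤ) * (w k 1 / n)
          - ((1 : ℤ) * (w k' 0 / n) + (v₂.val : ℤ) * (w k' 1 / n))
          = ((k : ℤ) - k') * ((ξ.val : ℤ) - 1) := by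
        rw [hw1 k, hw1 k'] at *
        have := hdiv
        ring_nf
        ring_nf at this
        linarith [this]
      rw [← Int.cast_sub, this]
      push_cast [ZMod.natCast_val, ZMod.cast_id]
      ring
    have h0 : ((((k : ℤ) - (k' : ℤ)) : ℤ) : ZMod n) * (ξ - 1) = 0 := by
      rw [← key k k', hsu_eq, sub_self]
    have hu : IsUnit (ξ - 1) := by
      have := h1ξ.neg
      simpa [neg_sub] using this
    have h1 : ((((k : ℤ) - (k' : ℤ)) : ℤ) : ZMod n) = 0 := by
      have := hu.mul_right_cancel (by rw [h0, zero_mul] :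
        ((((k : ℤ) - (k' : ℤ)) : ℤ) : ZMod n) * (ξ - 1) = 0 * (ξ - 1))
      exact this
    have h2 : (k : ZMod n) = (k' : ZMod n) := by
      push_cast at h1
      linear_combination h1
    have := congrArg ZMod.val h2
    rwa [ZMod.val_natCast_of_lt hk, ZMod.val_natCast_of_lt hk'] at this
end
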